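/- Stationarity from the decoupled ansatz: under the hypotheses of the decoupling lemma, and assuming additionally the gain condition Λ(T_{k+1}, Π²*) + Υ(T_{k+1})Π¹*_k = 0 and offset condition Υ(T_{k+1})Σ¹*_k + Φ(T_{k+1}, Π²*, φ_{k+1}) = 0 for all k, the process y_k = T_k x*_k + φ_k satisfies the stationarity condition B_kᵀE[y_{k+1}|F_{k−1}] + E_kᵀE[y_{k+1}ω_k|F_{k−1}] + L_k x*_k + R_k u*_k + ρ_k = 0 almost surely for all k ∈ {0,…,N−1}. -/

import Mathlib

/-!
Write the closed-loop state as `x_{k+1} = H_k + ω_k K_k`, where the drift part `H_k` and the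
diffusion part `K_k` are `F_k`-measurable. Conditioning `y_{k+1} = T_{k+1} x_{k+1} + φ_{k+1}` and
`ω_k y_{k+1}` on `F_k` pulls `H_k` and `K_k` out of the conditional expectations, after which the
stationarity residual regroups exactly as `(Λ + ΥΠ¹*) x*_k + (ΥΣ¹* + Φ)`; both brackets vanish by
the gain and offset conditions. The analytic input is that all these products are integrable: the
state stays square integrable along the recursion because `E[ω_k² | F_k] = 1` gives
`∫ ω_k² g = ∫ g` for every `F_k`-measurable `g ≥ 0` (first for truncations of `g`, then by
monotone convergence).
-/

open Matrix MeasureTheory Finset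

/-- Entrywise conditional expectation of a random vector. -/
noncomputable def cexpV {Ω : Type} {m0 : MeasurableSpace Ω} (μ : Measure Ω)
    (G : MeasurableSpace Ω) {n : ℕ} (f : Ω → Fin n → ℝ) : Ω → Fin n → ℝ :=
  fun w i => (μ[fun v => f v i | G]) w

/-- Entrywise conditional expectation of a random matrix. -/
noncomputable def cexpM {Ω : Type} {m0 : MeasurableSpace Ω} (μ : Measure Ω)
    (G : MeasurableSpace Ω) {a b : ℕ} (T : Ω → Matrix (Fin a) (Fin b) ℝ) :
    Ω → Matrix (Fin a) (Fin b) ℝ :=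
  fun w => Matrix.of fun i j => (μ[fun v => T v i j | G]) w

/-- `Υ(T) = R + BᵀE[T|F]B + BᵀE[Tω|F]E + EᵀE[Tω|F]B + EᵀE[Tω²|F]E` (Appendix A). -/
noncomputable def UpsOp {Ω : Type} {m0 : MeasurableSpace Ω} (μ : Measure Ω)
    (G : MeasurableSpace Ω) {n m : ℕ} (wn : Ω → ℝ) (R : Ω → Matrix (Fin m) (Fin m) ℝ)
    (B E : Ω → Matrix (Fin n) (Fin m) ℝ) (T : Ω → Matrix (Fin n) (Fin n) ℝ) :
    Ω → Matrix (Fin m) (Fin m) ℝ := fun w =>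
  R w + (B w)ᵀ * cexpM μ G T w * B w
    + (B w)ᵀ * cexpM μ G (fun v => wn v • T v) w * E w
    + (E w)ᵀ * cexpM μ G (fun v => wn v • T v) w * B w
    + (E w)ᵀ * cexpM μ G (fun v => wn v ^ 2 • T v) w * E w

/-- `Λ(T, Π²) = L + BᵀE[T|F](A+CΠ²) + EᵀE[Tω|F](A+CΠ²) + BᵀE[Tω|F](D+FΠ²)
    + EᵀE[Tω²|F](D+FΠ²)` (Appendix A). -/
noncomputable def LamOp {Ω : Type} {m0 : MeasurableSpace Ω} (μ : Measure Ω)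
    (G : MeasurableSpace Ω) {n m l : ℕ} (wn : Ω → ℝ) (L : Ω → Matrix (Fin m) (Fin n) ℝ)
    (A D : Ω → Matrix (Fin n) (Fin n) ℝ) (B E : Ω → Matrix (Fin n) (Fin m) ℝ)
    (C F : Ω → Matrix (Fin n) (Fin l) ℝ) (P2 : Ω → Matrix (Fin l) (Fin n) ℝ)
    (T : Ω → Matrix (Fin n) (Fin n) ℝ) : Ω → Matrix (Fin m) (Fin n) ℝ := fun w =>
  L w + (B w)ᵀ * cexpM μ G T w * (A w + C w * P2 w)
    + (E w)ᵀ * cexpM μ G (fun v => wn v • T v) w * (A w + C w * P2 w)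
    + (B w)ᵀ * cexpM μ G (fun v => wn v • T v) w * (D w + F w * P2 w)
    + (E w)ᵀ * cexpM μ G (fun v => wn v ^ 2 • T v) w * (D w + F w * P2 w)

/-- `Δ(T, Π²)` of Appendix A. -/
noncomputable def DelOp {Ω : Type} {m0 : MeasurableSpace Ω} (μ : Measure Ω)
    (G : MeasurableSpace Ω) {n l : ℕ} (wn : Ω → ℝ) (Q : Ω → Matrix (Fin n) (Fin n) ℝ)
    (A D : Ω → Matrix (Fin n) (Fin n) ℝ) (C F : Ω → Matrix (Fin n) (Fin l) ℝ)
    (P2 : Ω → Matrix (Fin l) (Fin n) ℝ) (T : Ω → Matrix (Fin n) (Fin n) ℝ) :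
    Ω → Matrix (Fin n) (Fin n) ℝ := fun w =>
  Q w + (A w + C w * P2 w)ᵀ * cexpM μ G T w * (A w + C w * P2 w)
    + (A w + C w * P2 w)ᵀ * cexpM μ G (fun v => wn v • T v) w * (D w + F w * P2 w)
    + (D w + F w * P2 w)ᵀ * cexpM μ G (fun v => wn v • T v) w * (A w + C w * P2 w)
    + (D w + F w * P2 w)ᵀ * cexpM μ G (fun v => wn v ^ 2 • T v) w * (D w + F w * P2 w)

/-- `Φ(T, Π², φ)` of Appendix A (affine term of the stationarity condition). -/
noncomputable def PhiOp {Ω : Type} {m0 : MeasurableSpace Ω} (μ : Measure Ω)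
    (G : MeasurableSpace Ω) {n m l : ℕ} (wn : Ω → ℝ) (ρ : Ω → Fin m → ℝ)
    (B E : Ω → Matrix (Fin n) (Fin m) ℝ) (C F : Ω → Matrix (Fin n) (Fin l) ℝ)
    (bb sg : Ω → Fin n → ℝ) (S2 : Ω → Fin l → ℝ)
    (T : Ω → Matrix (Fin n) (Fin n) ℝ) (φ : Ω → Fin n → ℝ) : Ω → Fin m → ℝ := fun w =>
  ρ w + (B w)ᵀ *ᵥ (cexpM μ G T w *ᵥ (C w *ᵥ S2 w + bb w)
      + cexpM μ G (fun v => wn v • T v) w *ᵥ (F w *ᵥ S2 w + sg w)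
      + cexpV μ G φ w)
    + (E w)ᵀ *ᵥ (cexpM μ G (fun v => wn v • T v) w *ᵥ (C w *ᵥ S2 w + bb w)
      + cexpM μ G (fun v => wn v ^ 2 • T v) w *ᵥ (F w *ᵥ S2 w + sg w)
      + cexpV μ G (fun v => wn v • φ v) w)

/-- `Θ(T, Π², φ)` of Appendix A (affine term of the backward equation). -/
noncomputable def ThetaOp {Ω : Type} {m0 : MeasurableSpace Ω} (μ : Measure Ω)
    (G : MeasurableSpace Ω) {n l : ℕ} (wn : Ω → ℝ) (q : Ω → Fin n → ℝ)
    (A D : Ω → Matrix (Fin n) (Fin n) ℝ) (C F : Ω → Matrix (Fin n) (Fin l) ℝ)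
    (P2 : Ω → Matrix (Fin l) (Fin n) ℝ) (bb sg : Ω → Fin n → ℝ) (S2 : Ω → Fin l → ℝ)
    (T : Ω → Matrix (Fin n) (Fin n) ℝ) (φ : Ω → Fin n → ℝ) : Ω → Fin n → ℝ := fun w =>
  q w + (A w + C w * P2 w)ᵀ *ᵥ (cexpM μ G T w *ᵥ (C w *ᵥ S2 w + bb w)
      + cexpM μ G (fun v => wn v • T v) w *ᵥ (F w *ᵥ S2 w + sg w)
      + cexpV μ G φ w)
    + (D w + F w * P2 w)ᵀ *ᵥ (cexpM μ G (fun v => wn v • T v) w *ᵥ (C w *ᵥ S2 w + bb w)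
      + cexpM μ G (fun v => wn v ^ 2 • T v) w *ᵥ (F w *ᵥ S2 w + sg w)
      + cexpV μ G (fun v => wn v • φ v) w)

section ConditionalIntegrability

variable {Ω : Type*} {m m0 : MeasurableSpace Ω} {μ : Measure Ω} [IsFiniteMeasure μ]
  {X g : Ω → ℝ}

theorem integrable_mul_of_condExp_eq_one_of_nonneg (hm : m ≤ m0) (hX : Integrable X μ)
    (hX0 : ∀ w, 0 ≤ X w) (hXm : μ[X | m] =ᵐ[μ] fun _ => 1) (hgm : StronglyMeasurable[m] g)
    (hg : Integrable g μ) (hg0 : ∀ w, 0 ≤ g w) :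
    Integrable (fun w => X w * g w) μ := by
  set gn : ℕ → Ω → ℝ := fun n w => min (g w) n
  have hgn_meas : ∀ n, StronglyMeasurable[m] (gn n) :=
    fun n => (hgm.measurable.min measurable_const).stronglyMeasurable
  have hgn_norm : ∀ n w, ‖gn n w‖ = gn n w :=
    fun n w => Real.norm_of_nonneg (le_min (hg0 w) n.cast_nonneg)
  have hgn_int : ∀ n, Integrable (fun w => X w * gn n w) μ := fun n =>
    hX.mul_bdd ((hgn_meas n).mono hm).aestronglyMeasurable <|
      ae_of_all _ fun w => (hgn_norm n w).trans_le (min_le_right _ _)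
  -- on each truncation the factor `X` integrates out, since `E[X | m] = 1`
  have hgn_le : ∀ n, ∫ w, X w * gn n w ∂μ ≤ ∫ w, g w ∂μ := fun n => calc
    ∫ w, X w * gn n w ∂μ = ∫ w, gn n w ∂μ := by
      rw [← integral_condExp hm]
      refine integral_congr_ae ?_
      filter_upwards [condExp_mul_of_stronglyMeasurable_right (hgn_meas n) (hgn_int n) hX, hXm]
        with w h1 h2
      exact h1.trans (by rw [Pi.mul_apply, h2, one_mul])
    _ ≤ ∫ w, g w ∂μ :=
      integral_mono (hg.mono' ((hgn_meas n).mono hm).aestronglyMeasurable <|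
        ae_of_all _ fun w => (hgn_norm n w).trans_le (min_le_left _ _)) hg
        fun w => min_le_left _ _
  have hsup : ∀ w, ⨆ n, ENNReal.ofReal (X w * gn n w) = ENNReal.ofReal (X w * g w) := fun w =>
    le_antisymm
      (iSup_le fun n => ENNReal.ofReal_le_ofReal <|
        mul_le_mul_of_nonneg_left (min_le_left _ _) (hX0 w))
      (le_iSup_of_le ⌈g w⌉₊ <| by simp only [gn, min_eq_left (Nat.le_ceil (g w)), le_rfl])
  refine ⟨hX.1.mul hg.1, (hasFiniteIntegral_iff_ofReal <|
    ae_of_all _ fun w => mul_nonneg (hX0 w) (hg0 w)).2 ?_⟩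
  calc ∫⁻ w, ENNReal.ofReal (X w * g w) ∂μ
      = ⨆ n, ∫⁻ w, ENNReal.ofReal (X w * gn n w) ∂μ := by
        simp only [← hsup]
        refine lintegral_iSup' (fun n => (hgn_int n).1.aemeasurable.ennreal_ofReal) <|
          ae_of_all _ fun w n n' hnn' => ENNReal.ofReal_le_ofReal <|
            mul_le_mul_of_nonneg_left (min_le_min le_rfl (Nat.cast_le.2 hnn')) (hX0 w)
    _ ≤ ENNReal.ofReal (∫ w, g w ∂μ) := iSup_le fun n => by
        rw [← ofReal_integral_eq_lintegral_ofReal (hgn_int n) <|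
          ae_of_all _ fun w => mul_nonneg (hX0 w) ((norm_nonneg _).trans_eq (hgn_norm n w))]
        exact ENNReal.ofReal_le_ofReal (hgn_le n)
    _ < ⊤ := ENNReal.ofReal_lt_top

theorem integrable_mul_of_condExp_eq_one (hm : m ≤ m0) (hX : Integrable X μ)
    (hX0 : ∀ w, 0 ≤ X w) (hXm : μ[X | m] =ᵐ[μ] fun _ => 1) (hgm : StronglyMeasurable[m] g)
    (hg : Integrable g μ) :
    Integrable (fun w => X w * g w) μ :=
  (integrable_mul_of_condExp_eq_one_of_nonneg hm hX hX0 hXm hgm.norm hg.norm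
    fun w => norm_nonneg _).mono' (hX.1.mul (hgm.mono hm).aestronglyMeasurable) <|
    ae_of_all _ fun w => by rw [norm_mul, Real.norm_of_nonneg (hX0 w)]

end ConditionalIntegrability

section RandomMatrices

variable {Ω : Type*} {m0 : MeasurableSpace Ω} {μ : Measure Ω} {G G' : MeasurableSpace Ω}
  {ι κ ν : Type*} {a f : Ω → ℝ}

def BddMeasurableMatrix (G : MeasurableSpace Ω) (M : Ω → Matrix ι κ ℝ) : Prop :=
  (∀ i j, StronglyMeasurable[G] fun w => M w i j) ∧ ∃ C, ∀ w i j, |M w i j| ≤ C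

def MeasurableL2Vector (G : MeasurableSpace Ω) (μ : Measure[m0] Ω) (v : Ω → ι → ℝ) : Prop :=
  ∀ i, StronglyMeasurable[G] (fun w => v w i) ∧ MemLp (fun w => v w i) 2 μ

namespace BddMeasurableMatrix

variable {M M' : Ω → Matrix ι κ ℝ}

theorem mono (hM : BddMeasurableMatrix G M) (hGG' : G ≤ G') : BddMeasurableMatrix G' M :=
  ⟨fun i j => (hM.1 i j).mono hGG', hM.2⟩

theorem add (hM : BddMeasurableMatrix G M) (hM' : BddMeasurableMatrix G M') :
    BddMeasurableMatrix G (fun w => M w + M' w) := by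
  obtain ⟨hMm, C, hC⟩ := hM
  obtain ⟨hM'm, C', hC'⟩ := hM'
  exact ⟨fun i j => (hMm i j).add (hM'm i j), C + C', fun w i j =>
    (abs_add_le _ _).trans (add_le_add (hC w i j) (hC' w i j))⟩

theorem mul [Fintype κ] {P : Ω → Matrix κ ν ℝ} (hM : BddMeasurableMatrix G M)
    (hP : BddMeasurableMatrix G P) : BddMeasurableMatrix G (fun w => M w * P w) := by
  obtain ⟨hMm, C, hC⟩ := hM
  obtain ⟨hPm, C', hC'⟩ := hP
  refine ⟨fun i j => ?_, Fintype.card κ * (C * C'), fun w i j => ?_⟩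
  · simp only [Matrix.mul_apply]
    exact Finset.stronglyMeasurable_fun_sum _ fun q _ => (hMm i q).mul (hPm q j)
  · calc |(M w * P w) i j| ≤ ∑ q, |M w i q * P w q j| := Finset.abs_sum_le_sum_abs _ _
      _ ≤ ∑ _q : κ, C * C' := Finset.sum_le_sum fun q _ => by
          rw [abs_mul]
          exact mul_le_mul (hC w i q) (hC' w q j) (abs_nonneg _) ((abs_nonneg _).trans (hC w i q))
      _ = Fintype.card κ * (C * C') := by simp

theorem mulVec [Fintype κ] (hG : G ≤ m0) (hM : BddMeasurableMatrix G M) {v : Ω → κ → ℝ}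
    (hv : MeasurableL2Vector G μ v) : MeasurableL2Vector G μ (fun w => M w *ᵥ v w) := by
  obtain ⟨hMm, C, hC⟩ := hM
  intro i
  simp only [Matrix.mulVec, dotProduct]
  refine ⟨Finset.stronglyMeasurable_fun_sum _ fun j _ => (hMm i j).mul (hv j).1,
    memLp_finsetSum _ fun j _ => ?_⟩
  exact (hv j).2.mul (memLp_top_of_bound ((hMm i j).mono hG).aestronglyMeasurable C <|
    ae_of_all _ fun w => (hC w i j))

theorem integrable_apply [IsFiniteMeasure μ] (hM : BddMeasurableMatrix m0 M) (i : ι) (j : κ) :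
    Integrable (fun w => M w i j) μ :=
  .of_bound (hM.1 i j).aestronglyMeasurable _ (ae_of_all _ fun w => hM.2.choose_spec w i j)

theorem integrable_smul_apply (hM : BddMeasurableMatrix m0 M) (ha : Integrable a μ) (i : ι)
    (j : κ) : Integrable (fun w => (a w • M w) i j) μ :=
  ha.mul_bdd (hM.1 i j).aestronglyMeasurable (ae_of_all _ fun w => hM.2.choose_spec w i j)

theorem integrable_apply_mul (hM : BddMeasurableMatrix m0 M) (hf : Integrable f μ) (i : ι)
    (j : κ) : Integrable (fun w => M w i j * f w) μ :=
  hf.bdd_mul (hM.1 i j).aestronglyMeasurable (ae_of_all _ fun w => hM.2.choose_spec w i j)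

theorem integrable_smul_apply_mul (hM : BddMeasurableMatrix m0 M)
    (haf : Integrable (fun w => a w * f w) μ) (i : ι) (j : κ) :
    Integrable (fun w => (a w • M w) i j * f w) μ :=
  (hM.integrable_apply_mul haf i j).congr <| ae_of_all _ fun w => by
    simp only [Matrix.smul_apply, smul_eq_mul]; ring

end BddMeasurableMatrix

namespace MeasurableL2Vector

variable {v v' : Ω → ι → ℝ}

theorem const [IsFiniteMeasure μ] (ξ : ι → ℝ) : MeasurableL2Vector G μ (fun _ => ξ) :=
  fun i => ⟨stronglyMeasurable_const, memLp_const (ξ i)⟩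

theorem mono (hv : MeasurableL2Vector G μ v) (hGG' : G ≤ G') : MeasurableL2Vector G' μ v :=
  fun i => ⟨(hv i).1.mono hGG', (hv i).2⟩

theorem add (hv : MeasurableL2Vector G μ v) (hv' : MeasurableL2Vector G μ v') :
    MeasurableL2Vector G μ (fun w => v w + v' w) :=
  fun i => ⟨(hv i).1.add (hv' i).1, (hv i).2.add (hv' i).2⟩

theorem smul [IsFiniteMeasure μ] (hG' : G' ≤ m0) (hGG' : G ≤ G') (hv : MeasurableL2Vector G μ v)
    {c : Ω → ℝ} (hc : StronglyMeasurable[G'] c) (hc2 : Integrable (fun w => c w ^ 2) μ)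
    (hc2G : μ[fun w => c w ^ 2 | G] =ᵐ[μ] fun _ => 1) :
    MeasurableL2Vector G' μ (fun w => c w • v w) := by
  intro i
  have hcv : StronglyMeasurable[G'] fun w => c w * v w i := hc.mul ((hv i).1.mono hGG')
  refine ⟨hcv, (memLp_two_iff_integrable_sq (hcv.mono hG').aestronglyMeasurable).2 ?_⟩
  simpa only [mul_pow, Pi.pow_apply] using integrable_mul_of_condExp_eq_one (hGG'.trans hG')
    hc2 (fun w => sq_nonneg _) hc2G ((hv i).1.pow 2) (hv i).2.integrable_sq

end MeasurableL2Vector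

theorem measurableL2Vector_of_recursion [IsFiniteMeasure μ] {G : ℕ → MeasurableSpace Ω}
    (hGle : ∀ k, G k ≤ m0) (hGmono : Monotone G) {N : ℕ} {c : ℕ → Ω → ℝ}
    (hc : ∀ k < N, StronglyMeasurable[G (k + 1)] (c k))
    (hc2 : ∀ k < N, Integrable (fun w => c k w ^ 2) μ)
    (hc2G : ∀ k < N, μ[fun w => c k w ^ 2 | G k] =ᵐ[μ] fun _ => 1)
    {H K : ℕ → Ω → (ι → ℝ) → ι → ℝ}
    (hH : ∀ k < N, ∀ y, MeasurableL2Vector (G k) μ y →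
      MeasurableL2Vector (G k) μ fun w => H k w (y w))
    (hK : ∀ k < N, ∀ y, MeasurableL2Vector (G k) μ y →
      MeasurableL2Vector (G k) μ fun w => K k w (y w))
    {x : ℕ → Ω → ι → ℝ} (hx0 : MeasurableL2Vector (G 0) μ (x 0))
    (hx : ∀ k < N, ∀ w, x (k + 1) w = H k w (x k w) + c k w • K k w (x k w)) :
    ∀ k ≤ N, MeasurableL2Vector (G k) μ (x k) := by
  intro k
  induction k with
  | zero => exact fun _ => hx0
  | succ k ih =>
    intro hk
    have hxk := ih (Nat.le_of_succ_le hk)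
    rw [show x (k + 1) = _ from funext (hx k hk)]
    exact ((hH k hk _ hxk).mono (hGmono k.le_succ)).add <|
      (hK k hk _ hxk).smul (hGle _) (hGmono k.le_succ) (hc k hk) (hc2 k hk) (hc2G k hk)

/-- `A y + B u + C v + b` at the feedback `u = Π¹ y + Σ¹`, `v = Π² y + Σ²`, grouped as in the
closed-loop recursion. -/
def closedLoopMap [Fintype ι] [Fintype κ] [Fintype ν] (A : Matrix ι ι ℝ)
    (B : Matrix ι κ ℝ) (C : Matrix ι ν ℝ) (P1 : Matrix κ ι ℝ) (P2 : Matrix ν ι ℝ) (S1 : κ → ℝ)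
    (S2 : ν → ℝ) (b y : ι → ℝ) : ι → ℝ :=
  (A + B * P1 + C * P2) *ᵥ y + B *ᵥ S1 + C *ᵥ S2 + b

theorem MeasurableL2Vector.closedLoopMap (hG : G ≤ m0) [Fintype ι] [Fintype κ] [Fintype ν]
    {A : Ω → Matrix ι ι ℝ} {B : Ω → Matrix ι κ ℝ} {C : Ω → Matrix ι ν ℝ}
    {P1 : Ω → Matrix κ ι ℝ} {P2 : Ω → Matrix ν ι ℝ} {S1 : Ω → κ → ℝ} {S2 : Ω → ν → ℝ}
    {b y : Ω → ι → ℝ} (hA : BddMeasurableMatrix G A) (hB : BddMeasurableMatrix G B)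
    (hC : BddMeasurableMatrix G C) (hP1 : BddMeasurableMatrix G P1)
    (hP2 : BddMeasurableMatrix G P2) (hS1 : MeasurableL2Vector G μ S1)
    (hS2 : MeasurableL2Vector G μ S2) (hb : MeasurableL2Vector G μ b)
    (hy : MeasurableL2Vector G μ y) :
    MeasurableL2Vector G μ fun w =>
      closedLoopMap (A w) (B w) (C w) (P1 w) (P2 w) (S1 w) (S2 w) (b w) (y w) :=
  (((((hA.add (hB.mul hP1)).add (hC.mul hP2)).mulVec hG hy).add (hB.mulVec hG hS1)).add
    (hC.mulVec hG hS2)).add hb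

end RandomMatrices

section ConditionalExpectation

variable {Ω : Type} {m0 : MeasurableSpace Ω} {μ : Measure Ω} {G : MeasurableSpace Ω} {n : ℕ}

theorem cexpV_add {f g : Ω → Fin n → ℝ} (hf : ∀ i, Integrable (fun w => f w i) μ)
    (hg : ∀ i, Integrable (fun w => g w i) μ) :
    cexpV μ G (fun w => f w + g w) =ᵐ[μ] fun w => cexpV μ G f w + cexpV μ G g w := by
  have hentry : ∀ i, ∀ᵐ w ∂μ,
      cexpV μ G (fun w => f w + g w) w i = cexpV μ G f w i + cexpV μ G g w i :=
    fun i => condExp_add (hf i) (hg i) G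
  filter_upwards [ae_all_iff.2 hentry] with w hw
  exact funext hw

theorem integrable_mulVec_apply {M : Ω → Matrix (Fin n) (Fin n) ℝ} {h : Ω → Fin n → ℝ}
    (hMh : ∀ i j, Integrable (fun w => M w i j * h w j) μ) (i : Fin n) :
    Integrable (fun w => (M w *ᵥ h w) i) μ :=
  integrable_finsetSum Finset.univ fun j _ => hMh i j

theorem cexpV_mulVec {M : Ω → Matrix (Fin n) (Fin n) ℝ} {h : Ω → Fin n → ℝ}
    (hh : ∀ j, StronglyMeasurable[G] fun w => h w j) (hM : ∀ i j, Integrable (fun w => M w i j) μ)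
    (hMh : ∀ i j, Integrable (fun w => M w i j * h w j) μ) :
    cexpV μ G (fun w => M w *ᵥ h w) =ᵐ[μ] fun w => cexpM μ G M w *ᵥ h w := by
  have hentry : ∀ i, ∀ᵐ w ∂μ,
      cexpV μ G (fun w => M w *ᵥ h w) w i = (cexpM μ G M w *ᵥ h w) i := by
    intro i
    have hpull : ∀ j, μ[fun w => M w i j * h w j | G] =ᵐ[μ]
        fun w => μ[fun w => M w i j | G] w * h w j :=
      fun j => condExp_mul_of_stronglyMeasurable_right (hh j) (hMh i j) (hM i j)
    have hsum : (fun w => (M w *ᵥ h w) i) = ∑ j, fun w => M w i j * h w j := by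
      funext w; simp [Matrix.mulVec, dotProduct]
    filter_upwards [condExp_finsetSum (s := Finset.univ) (fun j _ => hMh i j) G,
      ae_all_iff.2 hpull] with w hsw hw
    change μ[fun v => (M v *ᵥ h v) i | G] w = _
    rw [hsum, hsw, Finset.sum_apply]
    exact Finset.sum_congr rfl fun j _ => hw j
  filter_upwards [ae_all_iff.2 hentry] with w hw
  exact funext hw

theorem cexpV_mulVec_add_mulVec_add {M₁ M₂ : Ω → Matrix (Fin n) (Fin n) ℝ}
    {h₁ h₂ ψ : Ω → Fin n → ℝ} (hh₁ : ∀ j, StronglyMeasurable[G] fun w => h₁ w j)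
    (hh₂ : ∀ j, StronglyMeasurable[G] fun w => h₂ w j)
    (hM₁ : ∀ i j, Integrable (fun w => M₁ w i j) μ) (hM₂ : ∀ i j, Integrable (fun w => M₂ w i j) μ)
    (hM₁h₁ : ∀ i j, Integrable (fun w => M₁ w i j * h₁ w j) μ)
    (hM₂h₂ : ∀ i j, Integrable (fun w => M₂ w i j * h₂ w j) μ)
    (hψ : ∀ i, Integrable (fun w => ψ w i) μ) :
    cexpV μ G (fun w => M₁ w *ᵥ h₁ w + M₂ w *ᵥ h₂ w + ψ w) =ᵐ[μ]
      fun w => cexpM μ G M₁ w *ᵥ h₁ w + cexpM μ G M₂ w *ᵥ h₂ w + cexpV μ G ψ w := by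
  have hM₁h₁' := integrable_mulVec_apply hM₁h₁
  have hM₂h₂' := integrable_mulVec_apply hM₂h₂
  filter_upwards [cexpV_add (G := G) (f := fun w => M₁ w *ᵥ h₁ w + M₂ w *ᵥ h₂ w)
      (fun i => (hM₁h₁' i).add (hM₂h₂' i)) hψ, cexpV_add (G := G) hM₁h₁' hM₂h₂',
    cexpV_mulVec hh₁ hM₁ hM₁h₁, cexpV_mulVec hh₂ hM₂ hM₂h₂] with w hsum hsum₁₂ hsum₁ hsum₂
  rw [hsum, hsum₁₂, hsum₁, hsum₂]

variable [IsFiniteMeasure μ] {T : Ω → Matrix (Fin n) (Fin n) ℝ} {c : Ω → ℝ}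
  {H K φ : Ω → Fin n → ℝ}

theorem cexpV_mulVec_add_smul_add (hT : BddMeasurableMatrix m0 T) (hc : MemLp c 2 μ)
    (hH : MeasurableL2Vector G μ H) (hK : MeasurableL2Vector G μ K)
    (hφ : ∀ i, MemLp (fun w => φ w i) 2 μ) :
    cexpV μ G (fun w => T w *ᵥ (H w + c w • K w) + φ w) =ᵐ[μ] fun w =>
      cexpM μ G T w *ᵥ H w + cexpM μ G (fun v => c v • T v) w *ᵥ K w + cexpV μ G φ w := by
  have hy : (fun w => T w *ᵥ (H w + c w • K w) + φ w) =
      fun w => T w *ᵥ H w + (c w • T w) *ᵥ K w + φ w := by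
    funext w
    rw [mulVec_add, mulVec_smul, smul_mulVec]
  rw [hy]
  exact cexpV_mulVec_add_mulVec_add (fun j => (hH j).1) (fun j => (hK j).1) hT.integrable_apply
    (hT.integrable_smul_apply (hc.integrable one_le_two))
    (fun i j => hT.integrable_apply_mul ((hH j).2.integrable one_le_two) i j)
    (fun i j => hT.integrable_smul_apply_mul (hc.integrable_mul (hK j).2) i j)
    fun i => (hφ i).integrable one_le_two

theorem cexpV_smul_mulVec_add_smul_add (hG : G ≤ m0) (hT : BddMeasurableMatrix m0 T)
    (hc : MemLp c 2 μ) (hc2G : μ[fun w => c w ^ 2 | G] =ᵐ[μ] fun _ => 1)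
    (hH : MeasurableL2Vector G μ H) (hK : MeasurableL2Vector G μ K)
    (hφ : ∀ i, MemLp (fun w => φ w i) 2 μ) :
    cexpV μ G (fun w => c w • (T w *ᵥ (H w + c w • K w) + φ w)) =ᵐ[μ] fun w =>
      cexpM μ G (fun v => c v • T v) w *ᵥ H w + cexpM μ G (fun v => c v ^ 2 • T v) w *ᵥ K w
        + cexpV μ G (fun v => c v • φ v) w := by
  have hy : (fun w => c w • (T w *ᵥ (H w + c w • K w) + φ w)) =
      fun w => (c w • T w) *ᵥ H w + (c w ^ 2 • T w) *ᵥ K w + c w • φ w := by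
    funext w
    rw [mulVec_add, mulVec_smul, smul_add, smul_add, smul_smul, ← sq, smul_mulVec, smul_mulVec]
  rw [hy]
  exact cexpV_mulVec_add_mulVec_add (fun j => (hH j).1) (fun j => (hK j).1)
    (hT.integrable_smul_apply (hc.integrable one_le_two))
    (hT.integrable_smul_apply hc.integrable_sq)
    (fun i j => hT.integrable_smul_apply_mul (hc.integrable_mul (hH j).2) i j)
    (fun i j => hT.integrable_smul_apply_mul (integrable_mul_of_condExp_eq_one hG
      hc.integrable_sq (fun w => sq_nonneg _) hc2G (hK j).1 ((hK j).2.integrable one_le_two)) i j)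
    fun i => hc.integrable_mul (hφ i)

end ConditionalExpectation

section Stationarity

variable {Ω : Type} {m0 : MeasurableSpace Ω} {μ : Measure Ω} {G : MeasurableSpace Ω}
  {n m l : ℕ} {c : Ω → ℝ} {A D : Ω → Matrix (Fin n) (Fin n) ℝ}
  {B E : Ω → Matrix (Fin n) (Fin m) ℝ} {C F : Ω → Matrix (Fin n) (Fin l) ℝ}
  {L : Ω → Matrix (Fin m) (Fin n) ℝ} {R : Ω → Matrix (Fin m) (Fin m) ℝ}
  {P1 : Ω → Matrix (Fin m) (Fin n) ℝ} {P2 : Ω → Matrix (Fin l) (Fin n) ℝ}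
  {S1 : Ω → Fin m → ℝ} {S2 : Ω → Fin l → ℝ} {bb sg φ : Ω → Fin n → ℝ} {ρ : Ω → Fin m → ℝ}
  {T : Ω → Matrix (Fin n) (Fin n) ℝ}

theorem stationarity_residual_eq (x : Fin n → ℝ) (w : Ω) :
    (B w)ᵀ *ᵥ (cexpM μ G T w *ᵥ closedLoopMap (A w) (B w) (C w) (P1 w) (P2 w) (S1 w) (S2 w) (bb w) x
        + cexpM μ G (fun v => c v • T v) w
          *ᵥ closedLoopMap (D w) (E w) (F w) (P1 w) (P2 w) (S1 w) (S2 w) (sg w) x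
        + cexpV μ G φ w)
      + (E w)ᵀ *ᵥ (cexpM μ G (fun v => c v • T v) w
          *ᵥ closedLoopMap (A w) (B w) (C w) (P1 w) (P2 w) (S1 w) (S2 w) (bb w) x
        + cexpM μ G (fun v => c v ^ 2 • T v) w
          *ᵥ closedLoopMap (D w) (E w) (F w) (P1 w) (P2 w) (S1 w) (S2 w) (sg w) x
        + cexpV μ G (fun v => c v • φ v) w)
      + L w *ᵥ x + R w *ᵥ (P1 w *ᵥ x + S1 w) + ρ w
    = (LamOp μ G c L A D B E C F P2 T w + UpsOp μ G c R B E T w * P1 w) *ᵥ x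
      + (UpsOp μ G c R B E T w *ᵥ S1 w + PhiOp μ G c ρ B E C F bb sg S2 T φ w) := by
  simp only [closedLoopMap, LamOp, UpsOp, PhiOp, add_mulVec, mulVec_add, ← mulVec_mulVec]
  abel

theorem stationarity_of_gain_offset [IsFiniteMeasure μ] (hG : G ≤ m0)
    (hT : BddMeasurableMatrix m0 T) (hc : MemLp c 2 μ)
    (hc2G : μ[fun w => c w ^ 2 | G] =ᵐ[μ] fun _ => 1)
    (hA : BddMeasurableMatrix G A) (hD : BddMeasurableMatrix G D) (hB : BddMeasurableMatrix G B)
    (hE : BddMeasurableMatrix G E) (hC : BddMeasurableMatrix G C) (hF : BddMeasurableMatrix G F)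
    (hP1 : BddMeasurableMatrix G P1) (hP2 : BddMeasurableMatrix G P2)
    (hS1 : MeasurableL2Vector G μ S1) (hS2 : MeasurableL2Vector G μ S2)
    (hbb : MeasurableL2Vector G μ bb) (hsg : MeasurableL2Vector G μ sg)
    (hφ : ∀ i, MemLp (fun w => φ w i) 2 μ) {x x' : Ω → Fin n → ℝ}
    (hx : MeasurableL2Vector G μ x)
    (hx' : ∀ w, x' w = closedLoopMap (A w) (B w) (C w) (P1 w) (P2 w) (S1 w) (S2 w) (bb w) (x w)
      + c w • closedLoopMap (D w) (E w) (F w) (P1 w) (P2 w) (S1 w) (S2 w) (sg w) (x w))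
    (hgain : ∀ᵐ w ∂μ, LamOp μ G c L A D B E C F P2 T w + UpsOp μ G c R B E T w * P1 w = 0)
    (hoff : ∀ᵐ w ∂μ, UpsOp μ G c R B E T w *ᵥ S1 w + PhiOp μ G c ρ B E C F bb sg S2 T φ w = 0) :
    ∀ᵐ w ∂μ, (B w)ᵀ *ᵥ cexpV μ G (fun v => T v *ᵥ x' v + φ v) w
      + (E w)ᵀ *ᵥ cexpV μ G (fun v => c v • (T v *ᵥ x' v + φ v)) w
      + L w *ᵥ x w + R w *ᵥ (P1 w *ᵥ x w + S1 w) + ρ w = 0 := by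
  have hH := MeasurableL2Vector.closedLoopMap hG hA hB hC hP1 hP2 hS1 hS2 hbb hx
  have hK := MeasurableL2Vector.closedLoopMap hG hD hE hF hP1 hP2 hS1 hS2 hsg hx
  obtain rfl : x' = _ := funext hx'
  filter_upwards [cexpV_mulVec_add_smul_add hT hc hH hK hφ,
    cexpV_smul_mulVec_add_smul_add hG hT hc hc2G hH hK hφ, hgain, hoff] with w h₁ h₂ hgw how
  rw [h₁, h₂, stationarity_residual_eq, hgw, how, zero_mulVec, zero_add]

end Stationarity

theorem stmt17_general
    {Ω : Type} [m0 : MeasurableSpace Ω] (μ : Measure Ω) [IsProbabilityMeasure μ]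
    {n m l : ℕ} (N : ℕ)
    (G : ℕ → MeasurableSpace Ω) (hGle : ∀ k, G k ≤ m0) (hGmono : Monotone G)
    (wk : ℕ → Ω → ℝ)
    (hwmeas : ∀ k, StronglyMeasurable[G (k + 1)] (wk k))
    (hw2int : ∀ k, Integrable (fun w => wk k w ^ 2) μ)
    (hw2 : ∀ k, μ[(fun w => wk k w ^ 2) | G k] =ᵐ[μ] fun _ => 1)
    (A D : ℕ → Ω → Matrix (Fin n) (Fin n) ℝ) (B E : ℕ → Ω → Matrix (Fin n) (Fin m) ℝ)
    (C F : ℕ → Ω → Matrix (Fin n) (Fin l) ℝ) (bb sg : ℕ → Ω → Fin n → ℝ)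
    (Q : ℕ → Ω → Matrix (Fin n) (Fin n) ℝ) (L : ℕ → Ω → Matrix (Fin m) (Fin n) ℝ)
    (R : ℕ → Ω → Matrix (Fin m) (Fin m) ℝ)
    (q : ℕ → Ω → Fin n → ℝ) (ρ : ℕ → Ω → Fin m → ℝ)
    (Cb : ℝ)
    (hmeas : ∀ k < N, ∀ i j,
      StronglyMeasurable[G k] (fun w => A k w i j) ∧
      StronglyMeasurable[G k] (fun w => D k w i j) ∧
      StronglyMeasurable[G k] (fun w => Q k w i j))
    (hmeasBE : ∀ k < N, ∀ i j,
      StronglyMeasurable[G k] (fun w => B k w i j) ∧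
      StronglyMeasurable[G k] (fun w => E k w i j))
    (hmeasCF : ∀ k < N, ∀ i j,
      StronglyMeasurable[G k] (fun w => C k w i j) ∧
      StronglyMeasurable[G k] (fun w => F k w i j))
    (hbd : ∀ k < N, ∀ w, (∀ i j, |A k w i j| ≤ Cb) ∧ (∀ i j, |D k w i j| ≤ Cb) ∧
      (∀ i j, |B k w i j| ≤ Cb) ∧ (∀ i j, |E k w i j| ≤ Cb) ∧
      (∀ i j, |C k w i j| ≤ Cb) ∧ (∀ i j, |F k w i j| ≤ Cb) ∧
      (∀ i j, |Q k w i j| ≤ Cb) ∧ (∀ i j, |L k w i j| ≤ Cb) ∧ ∀ i j, |R k w i j| ≤ Cb)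
    (hvecmeas : ∀ k < N, ∀ i,
      StronglyMeasurable[G k] (fun w => bb k w i) ∧
      StronglyMeasurable[G k] (fun w => sg k w i) ∧
      StronglyMeasurable[G k] (fun w => q k w i))
    (hvecL2 : ∀ k < N, ∀ i, MemLp (fun w => bb k w i) 2 μ ∧
      MemLp (fun w => sg k w i) 2 μ ∧ MemLp (fun w => q k w i) 2 μ)
    -- equilibrium feedback gains (essentially bounded, adapted) and offsets (admissible)
    (P1s : ℕ → Ω → Matrix (Fin m) (Fin n) ℝ) (P2s : ℕ → Ω → Matrix (Fin l) (Fin n) ℝ)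
    (S1s : ℕ → Ω → Fin m → ℝ) (S2s : ℕ → Ω → Fin l → ℝ) (CbP : ℝ)
    (hP1meas : ∀ k < N, ∀ i j, StronglyMeasurable[G k] (fun w => P1s k w i j))
    (hP2meas : ∀ k < N, ∀ i j, StronglyMeasurable[G k] (fun w => P2s k w i j))
    (hP1bd : ∀ k < N, ∀ w i j, |P1s k w i j| ≤ CbP)
    (hP2bd : ∀ k < N, ∀ w i j, |P2s k w i j| ≤ CbP)
    (hS1meas : ∀ k < N, ∀ i, StronglyMeasurable[G k] (fun w => S1s k w i))
    (hS2meas : ∀ k < N, ∀ i, StronglyMeasurable[G k] (fun w => S2s k w i))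
    (hS1L2 : ∀ k < N, ∀ i, MemLp (fun w => S1s k w i) 2 μ)
    (hS2L2 : ∀ k < N, ∀ i, MemLp (fun w => S2s k w i) 2 μ)
    -- the Riccati-type process T and the offset process φ
    (T : ℕ → Ω → Matrix (Fin n) (Fin n) ℝ) (φ : ℕ → Ω → Fin n → ℝ) (CbT : ℝ)
    (hTmeas : ∀ k ≤ N, ∀ i j, StronglyMeasurable[G k] (fun w => T k w i j))
    (hTbd : ∀ k ≤ N, ∀ w i j, |T k w i j| ≤ CbT)
    (hφL2 : ∀ k ≤ N, ∀ i, MemLp (fun w => φ k w i) 2 μ)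
    -- the closed-loop state trajectory
    (ξ : Fin n → ℝ) (x : ℕ → Ω → Fin n → ℝ)
    (hx0 : ∀ w, x 0 w = ξ)
    (hxrec : ∀ k < N, ∀ w, x (k + 1) w
      = (A k w + B k w * P1s k w + C k w * P2s k w) *ᵥ x k w
        + B k w *ᵥ S1s k w + C k w *ᵥ S2s k w + bb k w
        + wk k w • ((D k w + E k w * P1s k w + F k w * P2s k w) *ᵥ x k w
            + E k w *ᵥ S1s k w + F k w *ᵥ S2s k w + sg k w))
    -- gain condition
    (hgain : ∀ k < N, ∀ᵐ w ∂μ,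
      LamOp μ (G k) (wk k) (L k) (A k) (D k) (B k) (E k) (C k) (F k) (P2s k)
          (T (k + 1)) w
        + UpsOp μ (G k) (wk k) (R k) (B k) (E k) (T (k + 1)) w * P1s k w = 0)
    -- offset condition
    (hoff : ∀ k < N, ∀ᵐ w ∂μ,
      UpsOp μ (G k) (wk k) (R k) (B k) (E k) (T (k + 1)) w *ᵥ S1s k w
        + PhiOp μ (G k) (wk k) (ρ k) (B k) (E k) (C k) (F k) (bb k) (sg k) (S2s k)
            (T (k + 1)) (φ (k + 1)) w = 0) :
    ∀ k < N, ∀ᵐ w ∂μ,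
      (B k w)ᵀ
          *ᵥ cexpV μ (G k) (fun v => T (k + 1) v *ᵥ x (k + 1) v + φ (k + 1) v) w
        + (E k w)ᵀ
          *ᵥ cexpV μ (G k)
              (fun v => wk k v • (T (k + 1) v *ᵥ x (k + 1) v + φ (k + 1) v)) w
        + L k w *ᵥ x k w + R k w *ᵥ (P1s k w *ᵥ x k w + S1s k w) + ρ k w = 0 := by
  have hA : ∀ k < N, BddMeasurableMatrix (G k) (A k) := fun k hk =>
    ⟨fun i j => (hmeas k hk i j).1, Cb, fun w => (hbd k hk w).1⟩
  have hD : ∀ k < N, BddMeasurableMatrix (G k) (D k) := fun k hk =>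
    ⟨fun i j => (hmeas k hk i j).2.1, Cb, fun w => (hbd k hk w).2.1⟩
  have hB : ∀ k < N, BddMeasurableMatrix (G k) (B k) := fun k hk =>
    ⟨fun i j => (hmeasBE k hk i j).1, Cb, fun w => (hbd k hk w).2.2.1⟩
  have hE : ∀ k < N, BddMeasurableMatrix (G k) (E k) := fun k hk =>
    ⟨fun i j => (hmeasBE k hk i j).2, Cb, fun w => (hbd k hk w).2.2.2.1⟩
  have hC : ∀ k < N, BddMeasurableMatrix (G k) (C k) := fun k hk =>
    ⟨fun i j => (hmeasCF k hk i j).1, Cb, fun w => (hbd k hk w).2.2.2.2.1⟩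
  have hF : ∀ k < N, BddMeasurableMatrix (G k) (F k) := fun k hk =>
    ⟨fun i j => (hmeasCF k hk i j).2, Cb, fun w => (hbd k hk w).2.2.2.2.2.1⟩
  have hP1 : ∀ k < N, BddMeasurableMatrix (G k) (P1s k) := fun k hk =>
    ⟨hP1meas k hk, CbP, hP1bd k hk⟩
  have hP2 : ∀ k < N, BddMeasurableMatrix (G k) (P2s k) := fun k hk =>
    ⟨hP2meas k hk, CbP, hP2bd k hk⟩
  have hS1 : ∀ k < N, MeasurableL2Vector (G k) μ (S1s k) := fun k hk i =>
    ⟨hS1meas k hk i, hS1L2 k hk i⟩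
  have hS2 : ∀ k < N, MeasurableL2Vector (G k) μ (S2s k) := fun k hk i =>
    ⟨hS2meas k hk i, hS2L2 k hk i⟩
  have hbb : ∀ k < N, MeasurableL2Vector (G k) μ (bb k) := fun k hk i =>
    ⟨(hvecmeas k hk i).1, (hvecL2 k hk i).1⟩
  have hsg : ∀ k < N, MeasurableL2Vector (G k) μ (sg k) := fun k hk i =>
    ⟨(hvecmeas k hk i).2.1, (hvecL2 k hk i).2.1⟩
  have hx : ∀ k ≤ N, MeasurableL2Vector (G k) μ (x k) :=
    measurableL2Vector_of_recursion hGle hGmono (fun k _ => hwmeas k) (fun k _ => hw2int k)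
      (fun k _ => hw2 k)
      (fun k hk _ hy => .closedLoopMap (hGle k) (hA k hk) (hB k hk) (hC k hk) (hP1 k hk)
        (hP2 k hk) (hS1 k hk) (hS2 k hk) (hbb k hk) hy)
      (fun k hk _ hy => .closedLoopMap (hGle k) (hD k hk) (hE k hk) (hF k hk) (hP1 k hk)
        (hP2 k hk) (hS1 k hk) (hS2 k hk) (hsg k hk) hy)
      (by rw [show x 0 = fun _ => ξ from funext hx0]; exact .const ξ) hxrec
  intro k hk
  exact stationarity_of_gain_offset (hGle k)
    (BddMeasurableMatrix.mono ⟨hTmeas (k + 1) hk, CbT, hTbd (k + 1) hk⟩ (hGle (k + 1)))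
    ((memLp_two_iff_integrable_sq ((hwmeas k).mono (hGle _)).aestronglyMeasurable).2 (hw2int k))
    (hw2 k) (hA k hk) (hD k hk) (hB k hk) (hE k hk) (hC k hk) (hF k hk) (hP1 k hk) (hP2 k hk)
    (hS1 k hk) (hS2 k hk) (hbb k hk) (hsg k hk) (hφL2 (k + 1) hk) (hx k hk.le) (hxrec k hk)
    (hgain k hk) (hoff k hk)

/-- stationarity from the decoupled ansatz. Under the hypotheses of the
decoupling lemma, if additionally the gain condition `Λ(T_{k+1},Π²*) + Υ(T_{k+1})Π¹* = 0`
and the offset condition `Υ(T_{k+1})Σ¹* + Φ(T_{k+1},Π²*,φ_{k+1}) = 0` hold, then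
`y_k = T_k x*_k + φ_k` satisfies the stationarity condition
`BᵀE[y_{k+1}|F] + EᵀE[y_{k+1}ω|F] + L x* + R u* + ρ = 0` a.s. for all `k < N`. -/
theorem stmt17
    {Ω : Type} [m0 : MeasurableSpace Ω] (μ : Measure Ω) [IsProbabilityMeasure μ]
    {n m l : ℕ} (N : ℕ)
    (G : ℕ → MeasurableSpace Ω) (hGle : ∀ k, G k ≤ m0) (hGmono : Monotone G)
    (wk : ℕ → Ω → ℝ)
    (hwmeas : ∀ k, StronglyMeasurable[G (k + 1)] (wk k))
    (hwint : ∀ k, Integrable (wk k) μ) (hw2int : ∀ k, Integrable (fun w => wk k w ^ 2) μ)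
    (hw0 : ∀ k, μ[wk k | G k] =ᵐ[μ] fun _ => 0)
    (hw2 : ∀ k, μ[(fun w => wk k w ^ 2) | G k] =ᵐ[μ] fun _ => 1)
    (A D : ℕ → Ω → Matrix (Fin n) (Fin n) ℝ) (B E : ℕ → Ω → Matrix (Fin n) (Fin m) ℝ)
    (C F : ℕ → Ω → Matrix (Fin n) (Fin l) ℝ) (bb sg : ℕ → Ω → Fin n → ℝ)
    (Q : ℕ → Ω → Matrix (Fin n) (Fin n) ℝ) (L : ℕ → Ω → Matrix (Fin m) (Fin n) ℝ)
    (R : ℕ → Ω → Matrix (Fin m) (Fin m) ℝ)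
    (q : ℕ → Ω → Fin n → ℝ) (ρ : ℕ → Ω → Fin m → ℝ)
    (GN : Ω → Matrix (Fin n) (Fin n) ℝ) (gN : Ω → Fin n → ℝ)
    (Cb : ℝ)
    (hmeas : ∀ k < N, ∀ i j,
      StronglyMeasurable[G k] (fun w => A k w i j) ∧
      StronglyMeasurable[G k] (fun w => D k w i j) ∧
      StronglyMeasurable[G k] (fun w => Q k w i j))
    (hmeasBE : ∀ k < N, ∀ i j,
      StronglyMeasurable[G k] (fun w => B k w i j) ∧
      StronglyMeasurable[G k] (fun w => E k w i j))
    (hmeasCF : ∀ k < N, ∀ i j,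
      StronglyMeasurable[G k] (fun w => C k w i j) ∧
      StronglyMeasurable[G k] (fun w => F k w i j))
    (hmeasLR : ∀ k < N, (∀ i j, StronglyMeasurable[G k] (fun w => L k w i j)) ∧
      ∀ i j, StronglyMeasurable[G k] (fun w => R k w i j))
    (hbd : ∀ k < N, ∀ w, (∀ i j, |A k w i j| ≤ Cb) ∧ (∀ i j, |D k w i j| ≤ Cb) ∧
      (∀ i j, |B k w i j| ≤ Cb) ∧ (∀ i j, |E k w i j| ≤ Cb) ∧
      (∀ i j, |C k w i j| ≤ Cb) ∧ (∀ i j, |F k w i j| ≤ Cb) ∧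
      (∀ i j, |Q k w i j| ≤ Cb) ∧ (∀ i j, |L k w i j| ≤ Cb) ∧ ∀ i j, |R k w i j| ≤ Cb)
    (hvecmeas : ∀ k < N, ∀ i,
      StronglyMeasurable[G k] (fun w => bb k w i) ∧
      StronglyMeasurable[G k] (fun w => sg k w i) ∧
      StronglyMeasurable[G k] (fun w => q k w i))
    (hρmeas : ∀ k < N, ∀ i, StronglyMeasurable[G k] (fun w => ρ k w i))
    (hvecL2 : ∀ k < N, ∀ i, MemLp (fun w => bb k w i) 2 μ ∧
      MemLp (fun w => sg k w i) 2 μ ∧ MemLp (fun w => q k w i) 2 μ)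
    (hρL2 : ∀ k < N, ∀ i, MemLp (fun w => ρ k w i) 2 μ)
    (hGNmeas : ∀ i j, StronglyMeasurable[G N] (fun w => GN w i j))
    (hGNbd : ∀ w i j, |GN w i j| ≤ Cb)
    (hgNmeas : ∀ i, StronglyMeasurable[G N] (fun w => gN w i))
    (hgNL2 : ∀ i, MemLp (fun w => gN w i) 2 μ)
    -- equilibrium feedback gains (essentially bounded, adapted) and offsets (admissible)
    (P1s : ℕ → Ω → Matrix (Fin m) (Fin n) ℝ) (P2s : ℕ → Ω → Matrix (Fin l) (Fin n) ℝ)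
    (S1s : ℕ → Ω → Fin m → ℝ) (S2s : ℕ → Ω → Fin l → ℝ) (CbP : ℝ)
    (hP1meas : ∀ k < N, ∀ i j, StronglyMeasurable[G k] (fun w => P1s k w i j))
    (hP2meas : ∀ k < N, ∀ i j, StronglyMeasurable[G k] (fun w => P2s k w i j))
    (hP1bd : ∀ k < N, ∀ w i j, |P1s k w i j| ≤ CbP)
    (hP2bd : ∀ k < N, ∀ w i j, |P2s k w i j| ≤ CbP)
    (hS1meas : ∀ k < N, ∀ i, StronglyMeasurable[G k] (fun w => S1s k w i))
    (hS2meas : ∀ k < N, ∀ i, StronglyMeasurable[G k] (fun w => S2s k w i))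
    (hS1L2 : ∀ k < N, ∀ i, MemLp (fun w => S1s k w i) 2 μ)
    (hS2L2 : ∀ k < N, ∀ i, MemLp (fun w => S2s k w i) 2 μ)
    -- the Riccati-type process T and the offset process φ
    (T : ℕ → Ω → Matrix (Fin n) (Fin n) ℝ) (φ : ℕ → Ω → Fin n → ℝ) (CbT : ℝ)
    (hTmeas : ∀ k ≤ N, ∀ i j, StronglyMeasurable[G k] (fun w => T k w i j))
    (hTbd : ∀ k ≤ N, ∀ w i j, |T k w i j| ≤ CbT)
    (hφmeas : ∀ k ≤ N, ∀ i, StronglyMeasurable[G k] (fun w => φ k w i))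
    (hφL2 : ∀ k ≤ N, ∀ i, MemLp (fun w => φ k w i) 2 μ)
    (hTN : T N = GN) (hφN : φ N = gN)
    -- the Lyapunov-type backward equation for T
    (hLyap : ∀ k < N, T k =ᵐ[μ] fun w =>
      DelOp μ (G k) (wk k) (Q k) (A k) (D k) (C k) (F k) (P2s k) (T (k + 1)) w
        + (P1s k w)ᵀ
            * UpsOp μ (G k) (wk k) (R k) (B k) (E k) (T (k + 1)) w * P1s k w
        + (LamOp μ (G k) (wk k) (L k) (A k) (D k) (B k) (E k) (C k) (F k) (P2s k)
            (T (k + 1)) w)ᵀ * P1s k w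
        + (P1s k w)ᵀ * LamOp μ (G k) (wk k) (L k) (A k) (D k) (B k) (E k) (C k) (F k)
            (P2s k) (T (k + 1)) w)
    -- the backward equation for φ
    (hφeq : ∀ k < N, φ k =ᵐ[μ] fun w =>
      ThetaOp μ (G k) (wk k) (q k) (A k) (D k) (C k) (F k) (P2s k) (bb k) (sg k)
          (S2s k) (T (k + 1)) (φ (k + 1)) w
        + (LamOp μ (G k) (wk k) (L k) (A k) (D k) (B k) (E k) (C k) (F k) (P2s k)
            (T (k + 1)) w)ᵀ *ᵥ S1s k w)
    -- the closed-loop state trajectory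
    (ξ : Fin n → ℝ) (x : ℕ → Ω → Fin n → ℝ)
    (hx0 : ∀ w, x 0 w = ξ)
    (hxrec : ∀ k < N, ∀ w, x (k + 1) w
      = (A k w + B k w * P1s k w + C k w * P2s k w) *ᵥ x k w
        + B k w *ᵥ S1s k w + C k w *ᵥ S2s k w + bb k w
        + wk k w • ((D k w + E k w * P1s k w + F k w * P2s k w) *ᵥ x k w
            + E k w *ᵥ S1s k w + F k w *ᵥ S2s k w + sg k w))
    -- gain condition
    (hgain : ∀ k < N, ∀ᵐ w ∂μ,
      LamOp μ (G k) (wk k) (L k) (A k) (D k) (B k) (E k) (C k) (F k) (P2s k)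
          (T (k + 1)) w
        + UpsOp μ (G k) (wk k) (R k) (B k) (E k) (T (k + 1)) w * P1s k w = 0)
    -- offset condition
    (hoff : ∀ k < N, ∀ᵐ w ∂μ,
      UpsOp μ (G k) (wk k) (R k) (B k) (E k) (T (k + 1)) w *ᵥ S1s k w
        + PhiOp μ (G k) (wk k) (ρ k) (B k) (E k) (C k) (F k) (bb k) (sg k) (S2s k)
            (T (k + 1)) (φ (k + 1)) w = 0) :
    ∀ k < N, ∀ᵐ w ∂μ,
      (B k w)ᵀ
          *ᵥ cexpV μ (G k) (fun v => T (k + 1) v *ᵥ x (k + 1) v + φ (k + 1) v) w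
        + (E k w)ᵀ
          *ᵥ cexpV μ (G k)
              (fun v => wk k v • (T (k + 1) v *ᵥ x (k + 1) v + φ (k + 1) v)) w
        + L k w *ᵥ x k w + R k w *ᵥ (P1s k w *ᵥ x k w + S1s k w) + ρ k w = 0 :=
  stmt17_general (m0 := m0) μ N G hGle hGmono wk hwmeas hw2int hw2 A D B E C F bb sg Q L R q ρ Cb
    hmeas hmeasBE hmeasCF hbd hvecmeas hvecL2 P1s P2s S1s S2s CbP hP1meas hP2meas hP1bd hP2bd
    hS1meas hS2meas hS1L2 hS2L2 T φ CbT hTmeas hTbd hφL2 ξ x hx0 hxrec hgain hoff
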